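/- arXiv:1409.4662 — 2 statements merged into one kernel-verified Lean document; each statement's English description precedes it below -/
import Mathlib

section
/- Let C be a nonempty closed convex subset of a real Hilbert space H, A : C → H an α-inverse strongly monotone mapping with α > 0, λ ∈ (0, 2α), and p ∈ C with P_C(p − λAp) = p. Then for any u ∈ C and z = P_C(u − λAu): ‖z − p‖² ≤ ‖u − p‖² − ‖u − z‖² + 2λ‖u − z‖‖Au − Ap‖. -/
/-!
Both `z` and `p` are projections onto `C`, so the variational inequality of the projection,
tested at `p` for `z` and at `z` for `p`, gives
`⟪u - z, p - z⟫ ≤ λ ⟪A u - A p, p - z⟫ = λ ⟪A u - A p, p - u⟫ + λ ⟪A u - A p, u - z⟫`.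
Monotonicity of `A` kills the first term and Cauchy–Schwarz bounds the second, and
`‖z - p‖² = ‖u - p‖² - ‖u - z‖² + 2 ⟪u - z, p - z⟫` finishes the estimate.
-/

open scoped InnerProductSpace

section

variable {H : Type*} [NormedAddCommGroup H] [InnerProductSpace ℝ H]

lemma real_inner_sub_le_zero_of_forall_norm_sub_le {K : Set H} (hK : Convex ℝ K) {x v w : H}
    (hv : v ∈ K) (hmin : ∀ y ∈ K, ‖x - v‖ ≤ ‖x - y‖) (hw : w ∈ K) :
    ⟪x - v, w - v⟫_ℝ ≤ 0 := by
  have : Nonempty K := ⟨⟨v, hv⟩⟩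
  have hinf : ‖x - v‖ = ⨅ y : K, ‖x - y‖ :=
    le_antisymm (le_ciInf fun y ↦ hmin y y.2)
      (ciInf_le ⟨0, Set.forall_mem_range.2 fun _ ↦ norm_nonneg _⟩ (⟨v, hv⟩ : K))
  exact (norm_eq_iInf_iff_real_inner_le_zero hK hv).mp hinf w hw

lemma norm_sub_sq_le_of_real_inner_le_zero {u p z a b : H} {lam : ℝ} (hlam : 0 ≤ lam)
    (hz : ⟪u - lam • a - z, p - z⟫_ℝ ≤ 0) (hp : 0 ≤ ⟪lam • b, z - p⟫_ℝ)
    (hmono : 0 ≤ ⟪a - b, u - p⟫_ℝ) :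
    ‖z - p‖ ^ 2 ≤ ‖u - p‖ ^ 2 - ‖u - z‖ ^ 2 + 2 * lam * ‖u - z‖ * ‖a - b‖ := by
  have hsq : ‖u - p‖ ^ 2 = ‖u - z‖ ^ 2 - 2 * ⟪u - z, p - z⟫_ℝ + ‖p - z‖ ^ 2 := by
    rw [← norm_sub_sq_real, sub_sub_sub_cancel_right]
  have hcs : ⟪a - b, u - z⟫_ℝ ≤ ‖a - b‖ * ‖u - z‖ := real_inner_le_norm _ _
  have hsplit : ⟪u - z, p - z⟫_ℝ
      ≤ lam * ⟪a - b, u - z⟫_ℝ - lam * ⟪a - b, u - p⟫_ℝ := by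
    simp only [inner_sub_left, inner_sub_right, real_inner_smul_left] at hz hp ⊢
    linarith
  rw [norm_sub_rev z p]
  linarith [mul_nonneg hlam hmono, mul_le_mul_of_nonneg_left hcs hlam]

end

theorem stmt_8_general {H : Type*} [NormedAddCommGroup H] [InnerProductSpace ℝ H]
    (C : Set H) (hconv : Convex ℝ C)
    (P : H → H) (hPmem : ∀ x, P x ∈ C)
    (hPmin : ∀ x, ∀ z ∈ C, ‖x - P x‖ ≤ ‖x - z‖)
    (A : H → H) (α : ℝ) (hα : 0 < α)
    (hA : ∀ x ∈ C, ∀ y ∈ C, (inner ℝ (A x - A y) (x - y) : ℝ) ≥ α * ‖A x - A y‖ ^ 2)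
    (lam : ℝ) (hlam : lam ∈ Set.Ioo (0 : ℝ) (2 * α))
    (p : H) (hpC : p ∈ C) (hp : P (p - lam • A p) = p)
    (u : H) (huC : u ∈ C) (z : H) (hz : z = P (u - lam • A u)) :
    ‖z - p‖ ^ 2 ≤ ‖u - p‖ ^ 2 - ‖u - z‖ ^ 2 + 2 * lam * ‖u - z‖ * ‖A u - A p‖ := by
  have hvi : ∀ x, ∀ w ∈ C, ⟪x - P x, w - P x⟫_ℝ ≤ 0 := fun x _ hw ↦
    real_inner_sub_le_zero_of_forall_norm_sub_le hconv (hPmem x) (hPmin x) hw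
  have hz_vi : ⟪u - lam • A u - z, p - z⟫_ℝ ≤ 0 := hz ▸ hvi _ p hpC
  have hp_vi : 0 ≤ ⟪lam • A p, z - p⟫_ℝ := by
    have := hvi (p - lam • A p) z (hz ▸ hPmem _)
    rwa [hp, sub_sub_cancel_left, inner_neg_left, neg_nonpos] at this
  have hmono : 0 ≤ ⟪A u - A p, u - p⟫_ℝ := le_trans (by positivity) (hA u huC p hpC)
  exact norm_sub_sq_le_of_real_inner_le_zero hlam.1.le hz_vi hp_vi hmono

theorem stmt_8 {H : Type*} [NormedAddCommGroup H] [InnerProductSpace ℝ H]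
    (C : Set H) (hC : C.Nonempty) (hclosed : IsClosed C) (hconv : Convex ℝ C)
    (P : H → H) (hPmem : ∀ x, P x ∈ C)
    (hPmin : ∀ x, ∀ z ∈ C, ‖x - P x‖ ≤ ‖x - z‖)
    (A : H → H) (α : ℝ) (hα : 0 < α)
    (hA : ∀ x ∈ C, ∀ y ∈ C, (inner ℝ (A x - A y) (x - y) : ℝ) ≥ α * ‖A x - A y‖ ^ 2)
    (lam : ℝ) (hlam : lam ∈ Set.Ioo (0 : ℝ) (2 * α))
    (p : H) (hpC : p ∈ C) (hp : P (p - lam • A p) = p)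
    (u : H) (huC : u ∈ C) (z : H) (hz : z = P (u - lam • A u)) :
    ‖z - p‖ ^ 2 ≤ ‖u - p‖ ^ 2 - ‖u - z‖ ^ 2 + 2 * lam * ‖u - z‖ * ‖A u - A p‖ :=
  stmt_8_general C hconv P hPmem hPmin A α hα hA lam hlam p hpC hp u huC z hz
end

section
/- Let H be a real Hilbert space, C ⊆ H nonempty, G : C × C → ℝ a monotone bifunction (G(x,y) + G(y,x) ≤ 0 for all x, y ∈ C), φ : C → ℝ a function, B : C → H a mapping, and r, s > 0. Suppose u, v ∈ C and x, z ∈ H satisfy: G(u,y) + φ(y) − φ(u) + ⟨Bx, y − u⟩ + (1/r)⟨y − u, u − x⟩ ≥ 0 for all y ∈ C, and G(v,y) + φ(y) − φ(v) + ⟨Bz, y − v⟩ + (1/s)⟨y − v, v − z⟩ ≥ 0 for all y ∈ C. Then ⟨Bz − Bx, u − v⟩ + ⟨u − v, (v − z)/s − (u − x)/r⟩ ≥ 0. -/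
open scoped RealInnerProductSpace

/-- Test each inequality at the other solution and add: monotonicity of `G` disposes of the
`G`-terms and the `φ`-terms cancel. -/
theorem inner_sub_nonneg_of_perturbed_equilibria {H : Type*} [NormedAddCommGroup H]
    [InnerProductSpace ℝ H] {C : Set H} {G : H → H → ℝ}
    (hG : ∀ x ∈ C, ∀ y ∈ C, G x y + G y x ≤ 0) {φ : H → ℝ} {a b u v : H}
    (huC : u ∈ C) (hvC : v ∈ C)
    (hu : ∀ y ∈ C, 0 ≤ G u y + φ y - φ u + ⟪a, y - u⟫)
    (hv : ∀ y ∈ C, 0 ≤ G v y + φ y - φ v + ⟪b, y - v⟫) :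
    0 ≤ ⟪b - a, u - v⟫ := by
  have hu_v := hu v hvC
  have hv_u := hv u huC
  have hG_uv := hG u huC v hvC
  have ha : ⟪a, u - v⟫ = -⟪a, v - u⟫ := by rw [← inner_neg_right, neg_sub]
  rw [inner_sub_left, ha]
  linarith

theorem stmt_9_general {H : Type*} [NormedAddCommGroup H] [InnerProductSpace ℝ H]
    (C : Set H)
    (G : H → H → ℝ) (hG : ∀ x ∈ C, ∀ y ∈ C, G x y + G y x ≤ 0)
    (φ : H → ℝ) (B : H → H) (r s : ℝ)
    (u v : H) (huC : u ∈ C) (hvC : v ∈ C) (x z : H)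
    (hu : ∀ y ∈ C, G u y + φ y - φ u + (inner ℝ (B x) (y - u) : ℝ)
            + (1 / r) * (inner ℝ (y - u) (u - x) : ℝ) ≥ 0)
    (hv : ∀ y ∈ C, G v y + φ y - φ v + (inner ℝ (B z) (y - v) : ℝ)
            + (1 / s) * (inner ℝ (y - v) (v - z) : ℝ) ≥ 0) :
    (inner ℝ (B z - B x) (u - v) : ℝ)
      + (inner ℝ (u - v) ((1 / s) • (v - z) - (1 / r) • (u - x)) : ℝ) ≥ 0 := by
  have key := inner_sub_nonneg_of_perturbed_equilibria hG huC hvC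
    (φ := φ) (a := B x + (1 / r) • (u - x)) (b := B z + (1 / s) • (v - z))
    (fun y hy => by
      rw [inner_add_left, real_inner_smul_left, real_inner_comm (y - u) (u - x)]; linarith [hu y hy])
    (fun y hy => by
      rw [inner_add_left, real_inner_smul_left, real_inner_comm (y - v) (v - z)]; linarith [hv y hy])
  rwa [← real_inner_comm (u - v), ← inner_add_left, ← add_sub_add_comm, ge_iff_le]

theorem stmt_9 {H : Type*} [NormedAddCommGroup H] [InnerProductSpace ℝ H]
    (C : Set H) (hC : C.Nonempty)
    (G : H → H → ℝ) (hG : ∀ x ∈ C, ∀ y ∈ C, G x y + G y x ≤ 0)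
    (φ : H → ℝ) (B : H → H) (r s : ℝ) (hr : 0 < r) (hs : 0 < s)
    (u v : H) (huC : u ∈ C) (hvC : v ∈ C) (x z : H)
    (hu : ∀ y ∈ C, G u y + φ y - φ u + (inner ℝ (B x) (y - u) : ℝ)
            + (1 / r) * (inner ℝ (y - u) (u - x) : ℝ) ≥ 0)
    (hv : ∀ y ∈ C, G v y + φ y - φ v + (inner ℝ (B z) (y - v) : ℝ)
            + (1 / s) * (inner ℝ (y - v) (v - z) : ℝ) ≥ 0) :
    (inner ℝ (B z - B x) (u - v) : ℝ)
      + (inner ℝ (u - v) ((1 / s) • (v - z) - (1 / r) • (u - x)) : ℝ) ≥ 0 :=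
  stmt_9_general C G hG φ B r s u v huC hvC x z hu hv
end
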